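/- For all integers m ≥ 0 and n ≥ 0, the rational function h_m(v) is regular at v = 0 and its n-th Taylor coefficient at v = 0 equals (n!·(n+2k−1)!/(2k−1)!) times the coefficient of u^m in P_n(u). Equivalently, the double series identity ∑_{n≥0} (n!(n+2k−1)!/(2k−1)!)·P_n(u)·v^n = ∑_{m≥0} h_m(v)·u^m holds coefficientwise. -/

import Mathlib

/-!
Write `[vʲ] F` for the Laurent coefficients at `v = 0`. Since `v · d/dv` multiplies `[vʲ]` by `j`,
the recurrence defining `h m` becomes, coefficientwise,
`[v^(j+1)] h_m = m [vʲ] h_m - (m - 1 - k - j) [vʲ] h_(m-1) - j (j + 2k - 1) / 4 · [v^(j-1)] h_(m-1)`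
plus `[uᵐ] P₀` when `j = -1`. For `j < -1` and `h_(m-1)` regular this reads
`[v^(j+1)] h_m = m [vʲ] h_m`, which forces the negative coefficients to vanish because a Laurent
series has a lowest term; at `j = -1` it gives `[v⁰] h_m = [uᵐ] P₀`. On the other side, the
coefficient of `u^(m+1)` in the recurrence for `Pₙ`, multiplied by
`cₙ = n! (n + 2k - 1)! / (2k - 1)!` (so that `c_(n+1) = (n + 1)(n + 2k) cₙ`), shows that
`cₙ [uᵐ] Pₙ` obeys the same recurrence in `n`, while `[u⁰] P_(n+1) = 0`. Induction on `m` and then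
on `n` identifies the two.
-/

open Polynomial

noncomputable section

/-- Derivative of a rational function. -/
def ratDeriv (f : RatFunc ℂ) : RatFunc ℂ :=
  RatFunc.mk (Polynomial.derivative f.num * f.denom - f.num * Polynomial.derivative f.denom)
    (f.denom ^ 2)

open scoped LaurentSeries PowerSeries

namespace LaurentSeries

open HahnSeries

theorem coeff_eq_zero_of_coeff_eq_mul_coeff_sub_one {R : Type*} [Semiring R] {F : R⸨X⸩} (c : R)
    (hF : ∀ i < 0, F.coeff i = c * F.coeff (i - 1)) : ∀ i < 0, F.coeff i = 0 := by
  rcases eq_or_ne F 0 with rfl | hF0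
  · simp
  suffices 0 ≤ F.order from fun i hi => coeff_eq_zero_of_lt_order (hi.trans_le this)
  by_contra! hneg
  refine hF0 (coeff_order_eq_zero.mp ?_)
  rw [hF _ hneg, coeff_eq_zero_of_lt_order (by omega), mul_zero]

variable {R : Type*} [CommRing R]

theorem derivative_coeff (F : R⸨X⸩) (n : ℤ) :
    (derivative R F).coeff n = (n + 1) * F.coeff (n + 1) := by
  simp [zsmul_eq_mul]

theorem derivative_mul_single (F : R⸨X⸩) (j : ℤ) (c : R) :
    derivative R (F * single j c) =
      derivative R F * single j c + F * single (j - 1) (j * c) := by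
  ext i
  simp only [HahnSeries.coeff_add, derivative_coeff, HahnSeries.coeff_mul_single,
    show i + 1 - j = i - j + 1 by ring, show i - (j - 1) = i - j + 1 by ring]
  push_cast
  ring

theorem ofPowerSeries_monomial (m : ℕ) (b : R) :
    ofPowerSeries ℤ R (PowerSeries.monomial m b) = single (m : ℤ) b := by
  rw [← mul_one b, ← smul_eq_mul, map_smul, ← PowerSeries.X_pow_eq, PowerSeries.smul_eq_C_mul,
    map_mul, ofPowerSeries_C, ofPowerSeries_X_pow, C_apply, single_mul_single, zero_add,
    smul_eq_mul]

theorem derivative_mul_coe_polynomial (F : R⸨X⸩) (p : R[X]) :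
    derivative R (F * ((p : R⟦X⟧) : R⸨X⸩)) =
      derivative R F * ((p : R⟦X⟧) : R⸨X⸩) + F * ((Polynomial.derivative p : R⟦X⟧) : R⸨X⸩) := by
  induction p using Polynomial.induction_on' with
  | add p q hp hq =>
    simp only [Polynomial.coe_add, coe_add, mul_add, map_add, hp, hq]
    ring
  | monomial n a =>
    simp only [Polynomial.coe_monomial, ofPowerSeries_monomial, derivative_mul_single,
      Polynomial.derivative_monomial]
    rcases n with _ | n
    · simp
    · simp [mul_comm]

theorem derivative_one : derivative R (1 : R⸨X⸩) = 0 := by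
  simp [← single_zero_one]

theorem derivative_coe_polynomial (p : R[X]) :
    derivative R ((p : R⟦X⟧) : R⸨X⸩) = ((Polynomial.derivative p : R⟦X⟧) : R⸨X⸩) := by
  simpa only [one_mul, derivative_one, zero_mul, zero_add] using
    derivative_mul_coe_polynomial 1 p

end LaurentSeries

namespace RatFunc

variable {K : Type*} [Field K]

theorem coe_algebraMap_polynomial (p : K[X]) :
    ((algebraMap K[X] (RatFunc K) p : RatFunc K) : K⸨X⸩) = ((p : K⟦X⟧) : K⸨X⸩) :=
  (coe_coe p).symm

theorem coe_C (c : K) : ((C c : RatFunc K) : K⸨X⸩) = HahnSeries.C c := by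
  rw [← algebraMap_C, coe_algebraMap_polynomial, Polynomial.coe_C, PowerSeries.coe_C]

theorem coeff_coe_smul (c : K) (f : RatFunc K) (j : ℤ) :
    ((c • f : RatFunc K) : K⸨X⸩).coeff j = c * (f : K⸨X⸩).coeff j := by
  rw [Algebra.smul_def, map_mul, algebraMap_eq_C, coe_C, HahnSeries.C_mul_eq_smul,
    HahnSeries.coeff_smul, smul_eq_mul]

theorem coeff_coe_X_mul (f : RatFunc K) (j : ℤ) :
    ((X * f : RatFunc K) : K⸨X⸩).coeff j = (f : K⸨X⸩).coeff (j - 1) := by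
  rw [map_mul, coe_X, mul_comm, HahnSeries.coeff_mul_single, mul_one]

theorem coeff_coe_div_X (f : RatFunc K) (j : ℤ) :
    ((f / X : RatFunc K) : K⸨X⸩).coeff j = (f : K⸨X⸩).coeff (j + 1) := by
  rw [map_div₀, coe_X, div_eq_mul_inv, HahnSeries.inv_single, inv_one, HahnSeries.coeff_mul_single,
    sub_neg_eq_add, mul_one]

theorem coeff_coe_C_div_X (c : K) (j : ℤ) :
    ((C c / X : RatFunc K) : K⸨X⸩).coeff j = if j = -1 then c else 0 := by
  rw [coeff_coe_div_X, coe_C, HahnSeries.C_apply, HahnSeries.coeff_single]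
  simp [eq_neg_iff_add_eq_zero]

end RatFunc

theorem coe_ratDeriv (f : RatFunc ℂ) :
    (ratDeriv f : ℂ⸨X⸩) = LaurentSeries.derivative ℂ (f : ℂ⸨X⸩) := by
  have hq : ((f.denom : ℂ⟦X⟧) : ℂ⸨X⸩) ≠ 0 := by
    rw [RatFunc.coe_coe]; simpa using f.denom_ne_zero
  have hf : ((f.num : ℂ⟦X⟧) : ℂ⸨X⸩) = f * (f.denom : ℂ⟦X⟧) := by
    rw [← div_eq_iff hq]
    simpa only [map_div₀, RatFunc.coe_algebraMap_polynomial] using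
      congrArg (fun g : RatFunc ℂ => (g : ℂ⸨X⸩)) f.num_div_denom
  have hD := congrArg (LaurentSeries.derivative ℂ) hf
  rw [LaurentSeries.derivative_mul_coe_polynomial, LaurentSeries.derivative_coe_polynomial] at hD
  rw [ratDeriv, RatFunc.mk_eq_div]
  simp only [map_div₀, RatFunc.coe_algebraMap_polynomial, map_mul, map_sub, map_pow]
  rw [div_eq_iff (pow_ne_zero 2 hq)]
  linear_combination (((f.denom : ℂ⟦X⟧) : ℂ⸨X⸩)) * hD
    - ((Polynomial.derivative f.denom : ℂ⟦X⟧) : ℂ⸨X⸩) * hf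

theorem coeff_coe_X_mul_ratDeriv (f : RatFunc ℂ) (j : ℤ) :
    ((RatFunc.X * ratDeriv f : RatFunc ℂ) : ℂ⸨X⸩).coeff j = j * (f : ℂ⸨X⸩).coeff j := by
  rw [RatFunc.coeff_coe_X_mul, coe_ratDeriv, LaurentSeries.derivative_coeff, sub_add_cancel]
  push_cast
  ring

def hRecurrenceLhs (α β γ : ℂ) (f g : RatFunc ℂ) : RatFunc ℂ :=
  f / RatFunc.X - α • f + β • g - RatFunc.X * ratDeriv g
    + γ • (RatFunc.X * ratDeriv (RatFunc.X * g))
    + (1/4 : ℂ) • (RatFunc.X * ratDeriv (RatFunc.X * ratDeriv (RatFunc.X * g)))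

section hRecurrenceLhs

variable {f g : RatFunc ℂ} {α β γ c : ℂ}

theorem coeff_add_one_of_hRecurrenceLhs_eq (E : hRecurrenceLhs α β γ f g = RatFunc.C c / RatFunc.X)
    (j : ℤ) :
    (f : ℂ⸨X⸩).coeff (j + 1) = α * (f : ℂ⸨X⸩).coeff j - (β - j) * (g : ℂ⸨X⸩).coeff j
        - (γ + j / 4) * j * (g : ℂ⸨X⸩).coeff (j - 1) + if j = -1 then c else 0 := by
  have H := congrArg (fun q : RatFunc ℂ => (q : ℂ⸨X⸩).coeff j) E
  simp only [hRecurrenceLhs, map_add, map_sub, HahnSeries.coeff_add, HahnSeries.coeff_sub,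
    RatFunc.coeff_coe_smul, RatFunc.coeff_coe_C_div_X, coeff_coe_X_mul_ratDeriv] at H
  simp only [RatFunc.coeff_coe_div_X, RatFunc.coeff_coe_X_mul] at H
  rw [← H]
  ring

-- At `n = 0` the truncated index `n - 1` is harmless: that term carries the factor `n`.
theorem coeff_of_hRecurrenceLhs_eq (E : hRecurrenceLhs α β γ f g = RatFunc.C c / RatFunc.X)
    (hg : ∀ i < 0, (g : ℂ⸨X⸩).coeff i = 0) :
    (∀ i < 0, (f : ℂ⸨X⸩).coeff i = 0) ∧ (f : ℂ⸨X⸩).coeff 0 = c ∧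
      ∀ n : ℕ, (f : ℂ⸨X⸩).coeff ((n + 1 : ℕ) : ℤ) = α * (f : ℂ⸨X⸩).coeff n
        - (β - n) * (g : ℂ⸨X⸩).coeff n - (γ + n / 4) * n * (g : ℂ⸨X⸩).coeff ((n - 1 : ℕ) : ℤ) := by
  have hf : ∀ i < 0, (f : ℂ⸨X⸩).coeff i = 0 := by
    refine LaurentSeries.coeff_eq_zero_of_coeff_eq_mul_coeff_sub_one α fun i hi => ?_
    simpa [hg i hi, hg (i - 1) (by omega), hg (i - 1 - 1) (by omega), show i - 1 ≠ -1 by omega]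
      using coeff_add_one_of_hRecurrenceLhs_eq E (i - 1)
  refine ⟨hf, ?_, fun n => ?_⟩
  · simpa [hf, hg] using coeff_add_one_of_hRecurrenceLhs_eq E (-1)
  · rw [Nat.cast_succ, coeff_add_one_of_hRecurrenceLhs_eq E, if_neg (by omega)]
    rcases n with _ | n <;> simp

end hRecurrenceLhs

def taylorFactor (k n : ℕ) : ℂ :=
  (n.factorial : ℂ) * ((n + 2 * k - 1).factorial : ℂ) / ((2 * k - 1).factorial : ℂ)

theorem taylorFactor_zero (k : ℕ) : taylorFactor k 0 = 1 := by
  rw [taylorFactor, zero_add, Nat.factorial_zero, Nat.cast_one, one_mul,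
    div_self (by exact_mod_cast (2 * k - 1).factorial_ne_zero)]

theorem taylorFactor_succ {k : ℕ} (hk : 1 ≤ k) (n : ℕ) :
    taylorFactor k (n + 1) = ((n : ℂ) + 1) * ((n : ℂ) + 2 * k) * taylorFactor k n := by
  rw [taylorFactor, taylorFactor, show n + 1 + 2 * k - 1 = (n + 2 * k - 1) + 1 by omega,
    Nat.factorial_succ, Nat.factorial_succ]
  push_cast [Nat.cast_sub (by omega : 1 ≤ n + 2 * k)]
  ring

theorem Polynomial.coeff_X_mul_derivative {R : Type*} [Semiring R] (p : R[X]) (m : ℕ) :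
    (X * derivative p).coeff m = m * p.coeff m := by
  rcases m with _ | m
  · simp
  · rw [coeff_X_mul, coeff_derivative, ← Nat.cast_succ, Nat.cast_comm]

def PnRecurrence (k : ℕ) (Pn : ℕ → ℂ[X]) : Prop :=
  ∀ n : ℕ, (((n : ℂ) + 1) * ((n : ℂ) + 2 * k)) • Pn (n + 1)
    + (X ^ 2 - X) * derivative (Pn n)
    - ((n : ℂ) + k) • (X * Pn n)
    + (1/4 : ℂ) • (X * (if n = 0 then 0 else Pn (n - 1))) = 0

namespace PnRecurrence

variable {k : ℕ} {Pn : ℕ → ℂ[X]}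

theorem coeff_succ_zero (hk : 1 ≤ k) (hP : PnRecurrence k Pn) (n : ℕ) :
    (Pn (n + 1)).coeff 0 = 0 := by
  have H := congrArg (coeff · 0) (hP n)
  simp only [coeff_add, coeff_sub, coeff_smul, smul_eq_mul, mul_coeff_zero, coeff_X_zero,
    coeff_X_pow, OfNat.zero_ne_ofNat, if_false, zero_mul, mul_zero, sub_zero, add_zero,
    coeff_zero] at H
  refine (mul_eq_zero.mp H).resolve_left (mul_ne_zero n.cast_add_one_ne_zero ?_)
  exact_mod_cast (by omega : n + 2 * k ≠ 0)

theorem coeff_succ_succ (hP : PnRecurrence k Pn) (n m : ℕ) :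
    ((n : ℂ) + 1) * ((n : ℂ) + 2 * k) * (Pn (n + 1)).coeff (m + 1) =
      (m + 1) * (Pn n).coeff (m + 1) - (m - n - k) * (Pn n).coeff m
        - (if n = 0 then 0 else (Pn (n - 1)).coeff m) / 4 := by
  have H := congrArg (coeff · (m + 1)) (hP n)
  simp only [coeff_add, coeff_sub, coeff_smul, smul_eq_mul, coeff_X_mul, sub_mul, pow_two,
    mul_assoc, coeff_X_mul_derivative, coeff_derivative, apply_ite (coeff · m), coeff_zero] at H
  linear_combination H

theorem taylorFactor_mul_coeff_succ_succ (hk : 1 ≤ k) (hP : PnRecurrence k Pn) (n m : ℕ) :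
    taylorFactor k (n + 1) * (Pn (n + 1)).coeff (m + 1) =
      (m + 1) * (taylorFactor k n * (Pn n).coeff (m + 1))
        - (m - k - n) * (taylorFactor k n * (Pn n).coeff m)
        - ((2 * k - 1) / 4 + n / 4) * n * (taylorFactor k (n - 1) * (Pn (n - 1)).coeff m) := by
  rw [taylorFactor_succ hk, mul_right_comm, coeff_succ_succ hP]
  rcases n with _ | n
  · simp only [if_pos, Nat.cast_zero, zero_div, mul_zero, zero_mul, sub_zero]
    ring
  · rw [if_neg n.succ_ne_zero, Nat.add_sub_cancel, taylorFactor_succ hk]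
    push_cast
    ring

end PnRecurrence

theorem h_taylor_coeff_general_general
    (k : ℕ) (hk : 1 ≤ k)
    (Pn : ℕ → Polynomial ℂ)
    (hPnrec : ∀ n : ℕ,
      (((n : ℂ) + 1) * ((n : ℂ) + 2 * k)) • Pn (n + 1)
        + (X ^ 2 - X) * Polynomial.derivative (Pn n)
        - ((n : ℂ) + k) • (X * Pn n)
        + (1/4 : ℂ) • (X * (if n = 0 then 0 else Pn (n - 1))) = 0)
    (h : ℕ → RatFunc ℂ)
    (hrec : ∀ m : ℕ,
      h m / RatFunc.X - (m : ℂ) • h m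
        + ((m : ℂ) - 1 - k) • (if m = 0 then 0 else h (m - 1))
        - RatFunc.X * ratDeriv (if m = 0 then 0 else h (m - 1))
        + ((2 * (k : ℂ) - 1) / 4) •
            (RatFunc.X * ratDeriv (RatFunc.X * (if m = 0 then 0 else h (m - 1))))
        + (1/4 : ℂ) • (RatFunc.X * ratDeriv (RatFunc.X *
            ratDeriv (RatFunc.X * (if m = 0 then 0 else h (m - 1)))))
      = RatFunc.C ((Pn 0).coeff m) / RatFunc.X)
    (m : ℕ) :
    (∀ i : ℤ, i < 0 → ((h m : LaurentSeries ℂ)).coeff i = 0) ∧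
    (∀ n : ℕ, ((h m : LaurentSeries ℂ)).coeff (n : ℤ)
        = ((Nat.factorial n : ℂ) * (Nat.factorial (n + 2 * k - 1) : ℂ) /
            (Nat.factorial (2 * k - 1) : ℂ)) * (Pn n).coeff m) := by
  have hP : PnRecurrence k Pn := hPnrec
  change _ ∧ ∀ n : ℕ, _ = taylorFactor k n * _
  induction m with
  | zero =>
    have hr := hrec 0
    simp only [if_pos] at hr
    obtain ⟨hneg, h0, hsucc⟩ := coeff_of_hRecurrenceLhs_eq hr (by simp)
    refine ⟨hneg, fun n => ?_⟩
    rcases n with _ | n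
    · rw [Nat.cast_zero, h0, taylorFactor_zero, one_mul]
    · rw [hsucc, hP.coeff_succ_zero hk]
      simp
  | succ m ih =>
    have hr := hrec (m + 1)
    simp only [m.succ_ne_zero, if_false, Nat.add_sub_cancel] at hr
    obtain ⟨hneg, h0, hsucc⟩ := coeff_of_hRecurrenceLhs_eq hr ih.1
    refine ⟨hneg, fun n => ?_⟩
    induction n with
    | zero => rw [Nat.cast_zero, h0, taylorFactor_zero, one_mul]
    | succ n ihn =>
      rw [hsucc, ihn, ih.2, ih.2, hP.taylorFactor_mul_coeff_succ_succ hk]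
      push_cast
      ring

/-- For all `m, n ≥ 0`: the rational function `h m` is regular at `v = 0` (its Laurent
expansion at `0` has no negative-index coefficients) and its `n`-th Taylor coefficient at
`v = 0` equals `n!(n+2k-1)!/(2k-1)!` times the coefficient of `u^m` in `Pₙ(u)`; i.e. the
identity `∑_{n≥0} (n!(n+2k-1)!/(2k-1)!) Pₙ(u) vⁿ = ∑_{m≥0} h_m(v) u^m` holds
coefficientwise. -/
theorem h_taylor_coeff_general
    (k : ℕ) (hk : 1 ≤ k)
    (P : MvPolynomial (Fin 2) ℂ) (hP : P.IsHomogeneous k)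
    (Pn : ℕ → Polynomial ℂ)
    (hPn0 : Pn 0 = MvPolynomial.aeval ![1, Polynomial.X] P)
    (hPnrec : ∀ n : ℕ,
      (((n : ℂ) + 1) * ((n : ℂ) + 2 * k)) • Pn (n + 1)
        + (X ^ 2 - X) * Polynomial.derivative (Pn n)
        - ((n : ℂ) + k) • (X * Pn n)
        + (1/4 : ℂ) • (X * (if n = 0 then 0 else Pn (n - 1))) = 0)
    (h : ℕ → RatFunc ℂ)
    (hrec : ∀ m : ℕ,
      h m / RatFunc.X - (m : ℂ) • h m
        + ((m : ℂ) - 1 - k) • (if m = 0 then 0 else h (m - 1))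
        - RatFunc.X * ratDeriv (if m = 0 then 0 else h (m - 1))
        + ((2 * (k : ℂ) - 1) / 4) •
            (RatFunc.X * ratDeriv (RatFunc.X * (if m = 0 then 0 else h (m - 1))))
        + (1/4 : ℂ) • (RatFunc.X * ratDeriv (RatFunc.X *
            ratDeriv (RatFunc.X * (if m = 0 then 0 else h (m - 1)))))
      = RatFunc.C ((Pn 0).coeff m) / RatFunc.X)
    (m : ℕ) :
    (∀ i : ℤ, i < 0 → ((h m : LaurentSeries ℂ)).coeff i = 0) ∧
    (∀ n : ℕ, ((h m : LaurentSeries ℂ)).coeff (n : ℤ)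
        = ((Nat.factorial n : ℂ) * (Nat.factorial (n + 2 * k - 1) : ℂ) /
            (Nat.factorial (2 * k - 1) : ℂ)) * (Pn n).coeff m) :=
  h_taylor_coeff_general_general k hk Pn hPnrec h hrec m
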